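/- The number of linear collections of subsets of [n] is at most the number of scarce linear collections of subsets of [n] times 2^{2·∑_{k=0}^{⌊n/3⌋} C(n,k)}. -/

import Mathlib

/-- A related triple: `{X, Y, X ∪ Y}` with `X, Y` disjoint and nonempty. -/
def IsRelatedTriple (n : ℕ) (T : Finset (Finset (Fin n))) : Prop :=
  ∃ X Y : Finset (Fin n), X ≠ ∅ ∧ Y ≠ ∅ ∧ Disjoint X Y ∧ T = {X, Y, X ∪ Y}

def IsLinearSetOfSubsets (n : ℕ) (B : Finset (Finset (Fin n))) : Prop :=
  ∀ T : Finset (Finset (Fin n)), IsRelatedTriple n T → (T ∩ B).card ≠ 2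

def IsScarceLinearSet (n : ℕ) (B : Finset (Finset (Fin n))) : Prop :=
  ∀ T : Finset (Finset (Fin n)), IsRelatedTriple n T → (T ∩ B).card ≤ 1

/-!
The nonempty members of a linear family `B` are exactly the disjoint unions of its minimal
nonempty members (closure under disjoint unions, and `Z \ A ∈ B` for members `A ⊂ Z`), so `B` is
determined by these minimal members and by whether `∅ ∈ B`. Call a set small if it has at most
`n / 3` elements and big otherwise, and fix a maximum intersecting family `σ` of big minimal
members. Being an intersecting antichain, `σ` is scarce linear. By maximality every other big
minimal member `A` is disjoint from some `X ∈ σ`, and then `A = (X ∪ A) \ X`. Hence `B` is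
determined by `σ`, by its small minimal members (together with `∅` if `∅ ∈ B`), and by the
complements of the unions of disjoint pairs of big minimal members; the last two are families of
small sets, since two disjoint big sets together have more than `2n/3` elements.
-/

open Finset

theorem minimal_iff_minimal_of_le_of_forall {α : Type*} [PartialOrder α] [WellFoundedLT α]
    {P Q : α → Prop} (hQP : Q ≤ P) (hPQ : ∀ a, Minimal P a → Q a) {a : α} :
    Minimal Q a ↔ Minimal P a := by
  refine ⟨fun ha => ?_, fun ha => ha.mono hQP (hPQ a ha)⟩
  obtain ⟨b, hba, hb⟩ := exists_minimal_le_of_wellFoundedLT P a (hQP a ha.1)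
  rwa [ha.eq_of_le (hPQ b hb) hba] at hb

theorem Finset.exists_intersecting_subset_forall_exists_disjoint {α : Type*}
    [SemilatticeInf α] [OrderBot α] [DecidableEq α] (s : Finset α) (hs : ⊥ ∉ s) :
    ∃ t ⊆ s, (t : Set α).Intersecting ∧
      ∀ a ∈ s, a ∉ t → ∃ b ∈ t, Disjoint b a := by
  classical
  obtain ⟨t, ht, hmax⟩ := exists_max_image
    (s.powerset.filter fun t : Finset α => (t : Set α).Intersecting) card
    ⟨∅, by simp [Set.intersecting_empty]⟩
  rw [mem_filter, mem_powerset] at ht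
  refine ⟨t, ht.1, ht.2, fun a ha hat => ?_⟩
  by_contra! hdisj
  have hins : ((insert a t : Finset α) : Set α).Intersecting := by
    rw [coe_insert]
    exact ht.2.insert (ne_of_mem_of_not_mem ha hs) fun b hb h => hdisj b hb h.symm
  have := hmax (insert a t) (mem_filter.2 ⟨mem_powerset.2 (insert_subset ha ht.1), hins⟩)
  rw [card_insert_of_notMem hat] at this
  omega

theorem Finset.card_powerset_filter_card_le {α : Type*} (s : Finset α) (k : ℕ) :
    (s.powerset.filter fun t => t.card ≤ k).card = ∑ i ∈ range (k + 1), s.card.choose i := by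
  classical
  rw [card_eq_sum_card_fiberwise (f := card) (t := range (k + 1))
    fun t ht => mem_range.2 (Nat.lt_succ_of_le (mem_filter.1 ht).2)]
  refine sum_congr rfl fun i hi => ?_
  rw [← card_powersetCard, powersetCard_eq_filter, filter_filter]
  congr 1
  exact filter_congr fun t _ => by have := mem_range.1 hi; omega

variable {n : ℕ} {T B B' : Finset (Finset (Fin n))} {A X Y Z : Finset (Fin n)}

theorem IsRelatedTriple.eq_or_disjoint_or_subset (hT : IsRelatedTriple n T) (hX : X ∈ T)
    (hY : Y ∈ T) : X = Y ∨ Disjoint X Y ∨ X ⊆ Y ∨ Y ⊆ X := by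
  obtain ⟨A, C, -, -, hAC, rfl⟩ := hT
  simp only [mem_insert, mem_singleton] at hX hY
  rcases hX with rfl | rfl | rfl <;> rcases hY with rfl | rfl | rfl <;> simp [hAC, hAC.symm]

theorem isScarceLinearSet_of_intersecting_of_isAntichain
    (hB : (B : Set (Finset (Fin n))).Intersecting)
    (hB' : IsAntichain (· ⊆ ·) (B : Set (Finset (Fin n)))) : IsScarceLinearSet n B := by
  intro T hT
  refine card_le_one.2 fun X hX Y hY => ?_
  rw [mem_inter] at hX hY
  by_contra hXY
  rcases hT.eq_or_disjoint_or_subset hX.1 hY.1 with h | h | h | h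
  · exact hXY h
  · exact hB hX.2 hY.2 h
  · exact hB' hX.2 hY.2 hXY h
  · exact hB' hY.2 hX.2 (Ne.symm hXY) h

namespace IsLinearSetOfSubsets

theorem union_mem (hB : IsLinearSetOfSubsets n B) (hX : X ≠ ∅) (hY : Y ≠ ∅)
    (hXY : Disjoint X Y) (hXB : X ∈ B) (hYB : Y ∈ B) : X ∪ Y ∈ B := by
  by_contra hU
  refine hB _ ⟨X, Y, hX, hY, hXY, rfl⟩ ?_
  have : ({X, Y, X ∪ Y} : Finset _) ∩ B = {X, Y} := by
    ext; simp only [mem_inter, mem_insert, mem_singleton]; grind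
  rw [this, card_pair]
  rintro rfl
  exact hX (disjoint_self.1 hXY)

theorem mem_of_union_mem (hB : IsLinearSetOfSubsets n B) (hX : X ≠ ∅) (hY : Y ≠ ∅)
    (hXY : Disjoint X Y) (hXB : X ∈ B) (hUB : X ∪ Y ∈ B) : Y ∈ B := by
  by_contra hYB
  refine hB _ ⟨X, Y, hX, hY, hXY, rfl⟩ ?_
  have : ({X, Y, X ∪ Y} : Finset _) ∩ B = {X, X ∪ Y} := by
    ext; simp only [mem_inter, mem_insert, mem_singleton]; grind
  rw [this, card_pair]
  intro h
  exact hY (disjoint_self.1 (hXY.symm.mono_right (left_eq_union.1 h)))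

theorem sdiff_mem (hB : IsLinearSetOfSubsets n B) (hX : X ≠ ∅) (hXZ : X ⊂ Z) (hXB : X ∈ B)
    (hZB : Z ∈ B) : Z \ X ∈ B :=
  hB.mem_of_union_mem hX (sdiff_nonempty.2 hXZ.2).ne_empty disjoint_sdiff hXB
    (by rwa [union_sdiff_of_subset hXZ.1])

theorem subset_of_forall_minimal_mem (hB : IsLinearSetOfSubsets n B)
    (hB' : IsLinearSetOfSubsets n B') (hempty : ∅ ∈ B → ∅ ∈ B')
    (hmin : ∀ A, Minimal (· ∈ B.erase ∅) A → A ∈ B') : B ⊆ B' := by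
  intro Z hZ
  induction Z using Finset.strongInduction with
  | H Z ih =>
  obtain rfl | hZ0 := eq_or_ne Z ∅
  · exact hempty hZ
  obtain ⟨A, hAZ, hA⟩ := exists_minimal_le_of_wellFoundedLT _ Z (mem_erase.2 ⟨hZ0, hZ⟩)
  obtain ⟨hA0, hAB⟩ := mem_erase.1 hA.1
  obtain rfl | hAZ := eq_or_ssubset_of_subset hAZ
  · exact hmin A hA
  have hrest : Z \ A ∈ B' :=
    ih _ (sdiff_ssubset hAZ.1 (nonempty_iff_ne_empty.2 hA0)) (hB.sdiff_mem hA0 hAZ hAB hZ)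
  rw [← union_sdiff_of_subset hAZ.1]
  exact hB'.union_mem hA0 (sdiff_nonempty.2 hAZ.2).ne_empty disjoint_sdiff (hmin A hA) hrest

theorem eq_of_minimal_iff (hB : IsLinearSetOfSubsets n B) (hB' : IsLinearSetOfSubsets n B')
    (hempty : ∅ ∈ B ↔ ∅ ∈ B')
    (hmin : ∀ A, Minimal (· ∈ B.erase ∅) A ↔ Minimal (· ∈ B'.erase ∅) A) : B = B' :=
  Subset.antisymm
    (hB.subset_of_forall_minimal_mem hB' hempty.1 fun A hA => mem_of_mem_erase ((hmin A).1 hA).1)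
    (hB'.subset_of_forall_minimal_mem hB hempty.2 fun A hA => mem_of_mem_erase ((hmin A).2 hA).1)

end IsLinearSetOfSubsets

noncomputable section

namespace LinearSetOfSubsets

open scoped Classical

variable (n) in
def smallSets : Finset (Finset (Fin n)) := univ.filter fun A => A.card ≤ n / 3

theorem card_smallSets : (smallSets n).card = ∑ k ∈ range (n / 3 + 1), n.choose k := by
  rw [smallSets, ← powerset_univ, card_powerset_filter_card_le, card_univ, Fintype.card_fin]

variable (B) in
def bigMinimals : Finset (Finset (Fin n)) :=
  univ.filter fun A => Minimal (· ∈ B.erase ∅) A ∧ n / 3 < A.card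

theorem exists_core (B : Finset (Finset (Fin n))) :
    ∃ σ ⊆ bigMinimals B, (σ : Set (Finset (Fin n))).Intersecting ∧
      ∀ A ∈ bigMinimals B, A ∉ σ → ∃ X ∈ σ, Disjoint X A :=
  (bigMinimals B).exists_intersecting_subset_forall_exists_disjoint fun h =>
    (mem_erase.1 (mem_filter.1 h).2.1.1).1 rfl

variable (B) in
def core : Finset (Finset (Fin n)) := (exists_core B).choose

theorem core_subset : core B ⊆ bigMinimals B := (exists_core B).choose_spec.1

theorem core_intersecting : (core B : Set (Finset (Fin n))).Intersecting :=
  (exists_core B).choose_spec.2.1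

theorem exists_disjoint_of_notMem_core (hA : A ∈ bigMinimals B) (hAσ : A ∉ core B) :
    ∃ X ∈ core B, Disjoint X A :=
  (exists_core B).choose_spec.2.2 A hA hAσ

theorem core_isScarceLinearSet : IsScarceLinearSet n (core B) :=
  isScarceLinearSet_of_intersecting_of_isAntichain core_intersecting
    ((setOfPred_minimal_antichain _).subset fun _ hA => (mem_filter.1 (core_subset hA)).2.1)

variable (B) in
def smallCode : Finset (Finset (Fin n)) :=
  B.filter fun A => A.card ≤ n / 3 ∧ (A = ∅ ∨ Minimal (· ∈ B.erase ∅) A)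

variable (B) in
def pairCode : Finset (Finset (Fin n)) :=
  ((bigMinimals B ×ˢ bigMinimals B).filter fun p => Disjoint p.1 p.2).image
    fun p => (p.1 ∪ p.2)ᶜ

theorem smallCode_subset : smallCode B ⊆ smallSets n := fun _ hA =>
  mem_filter.2 ⟨mem_univ _, (mem_filter.1 hA).2.1⟩

theorem pairCode_subset : pairCode B ⊆ smallSets n := by
  intro A hA
  obtain ⟨⟨X, Y⟩, hXY, rfl⟩ := mem_image.1 hA
  obtain ⟨hXY, hdisj⟩ := mem_filter.1 hXY
  obtain ⟨hX, hY⟩ := mem_product.1 hXY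
  have hX := (mem_filter.1 hX).2.2
  have hY := (mem_filter.1 hY).2.2
  have hcard := card_le_univ (X ∪ Y)
  rw [Fintype.card_fin, card_union_of_disjoint hdisj] at hcard
  rw [smallSets, mem_filter, card_compl, Fintype.card_fin, card_union_of_disjoint hdisj]
  exact ⟨mem_univ _, by omega⟩

theorem empty_mem_smallCode_iff : ∅ ∈ smallCode B ↔ ∅ ∈ B := by
  simp [smallCode]

def candidates (σ e₁ e₂ : Finset (Finset (Fin n))) : Finset (Finset (Fin n)) :=
  σ ∪ ((e₂ ×ˢ σ).filter fun p => p.2 ⊂ p.1ᶜ).image (fun p => p.1ᶜ \ p.2) ∪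
    e₁.erase ∅

theorem candidates_subset (hB : IsLinearSetOfSubsets n B) :
    candidates (core B) (smallCode B) (pairCode B) ⊆ B.erase ∅ := by
  intro A hA
  simp only [candidates, mem_union] at hA
  rcases hA with (hA | hA) | hA
  · exact (mem_filter.1 (core_subset hA)).2.1.1
  · obtain ⟨⟨Z, X⟩, hZX, rfl⟩ := mem_image.1 hA
    obtain ⟨hZX, hXZ⟩ := mem_filter.1 hZX
    obtain ⟨hZ, hX⟩ := mem_product.1 hZX
    obtain ⟨⟨Y, Y'⟩, hYY', rfl⟩ := mem_image.1 hZ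
    obtain ⟨hYY', hdisj⟩ := mem_filter.1 hYY'
    obtain ⟨hY, hY'⟩ := mem_product.1 hYY'
    obtain ⟨hY0, hYB⟩ := mem_erase.1 (mem_filter.1 hY).2.1.1
    obtain ⟨hY'0, hY'B⟩ := mem_erase.1 (mem_filter.1 hY').2.1.1
    obtain ⟨hX0, hXB⟩ := mem_erase.1 (mem_filter.1 (core_subset hX)).2.1.1
    rw [compl_compl] at hXZ ⊢
    exact mem_erase.2 ⟨(sdiff_nonempty.2 hXZ.2).ne_empty,
      hB.sdiff_mem hX0 hXZ hXB (hB.union_mem hY0 hY'0 hdisj hYB hY'B)⟩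
  · obtain ⟨hA0, hA⟩ := mem_erase.1 hA
    exact mem_erase.2 ⟨hA0, (mem_filter.1 hA).1⟩

theorem minimal_mem_candidates (hA : Minimal (· ∈ B.erase ∅) A) :
    A ∈ candidates (core B) (smallCode B) (pairCode B) := by
  simp only [candidates, mem_union]
  obtain ⟨hA0, hAB⟩ := mem_erase.1 hA.1
  by_cases hsmall : A.card ≤ n / 3
  · exact Or.inr (mem_erase.2 ⟨hA0, mem_filter.2 ⟨hAB, hsmall, Or.inr hA⟩⟩)
  have hAbig : A ∈ bigMinimals B := mem_filter.2 ⟨mem_univ _, hA, by omega⟩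
  by_cases hAσ : A ∈ core B
  · exact Or.inl (Or.inl hAσ)
  obtain ⟨X, hXσ, hXA⟩ := exists_disjoint_of_notMem_core hAbig hAσ
  have hXbig := core_subset hXσ
  have hX0 := (mem_erase.1 (mem_filter.1 hXbig).2.1.1).1
  refine Or.inl (Or.inr (mem_image.2 ⟨((X ∪ A)ᶜ, X), mem_filter.2 ⟨?_, ?_⟩, ?_⟩))
  · refine mem_product.2 ⟨mem_image.2 ⟨(X, A), ?_, rfl⟩, hXσ⟩
    exact mem_filter.2 ⟨mem_product.2 ⟨hXbig, hAbig⟩, hXA⟩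
  · rw [compl_compl]
    exact ssubset_of_subset_of_ne subset_union_left
      fun h => hA0 (disjoint_self.1 (hXA.mono_left (left_eq_union.1 h)))
  · rw [compl_compl, union_sdiff_cancel_left hXA]

theorem minimal_candidates_iff (hB : IsLinearSetOfSubsets n B) :
    Minimal (· ∈ candidates (core B) (smallCode B) (pairCode B)) A ↔
      Minimal (· ∈ B.erase ∅) A :=
  minimal_iff_minimal_of_le_of_forall (fun _ h => candidates_subset hB h)
    fun _ => minimal_mem_candidates

theorem eq_of_codes_eq (hB : IsLinearSetOfSubsets n B) (hB' : IsLinearSetOfSubsets n B')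
    (hcore : core B = core B') (hsmall : smallCode B = smallCode B')
    (hpair : pairCode B = pairCode B') : B = B' := by
  refine hB.eq_of_minimal_iff hB' ?_ fun A => ?_
  · rw [← empty_mem_smallCode_iff, hsmall, empty_mem_smallCode_iff]
  · rw [← minimal_candidates_iff hB, ← minimal_candidates_iff hB', hcore, hsmall, hpair]

end LinearSetOfSubsets

end

open LinearSetOfSubsets in
theorem stmt_10 (n : ℕ) :
    Nat.card {B : Finset (Finset (Fin n)) // IsLinearSetOfSubsets n B} ≤
      Nat.card {B : Finset (Finset (Fin n)) // IsScarceLinearSet n B} *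
        2 ^ (2 * ∑ k ∈ Finset.range (n / 3 + 1), n.choose k) := by
  let code (B : {B : Finset (Finset (Fin n)) // IsLinearSetOfSubsets n B}) :
      {σ : Finset (Finset (Fin n)) // IsScarceLinearSet n σ} × (smallSets n).powerset ×
        (smallSets n).powerset :=
    (⟨core B, core_isScarceLinearSet⟩, ⟨smallCode B, mem_powerset.2 smallCode_subset⟩,
      ⟨pairCode B, mem_powerset.2 pairCode_subset⟩)
  have hcode : Function.Injective code := fun B B' h => by
    simp only [code, Prod.mk.injEq, Subtype.mk.injEq] at h
    exact Subtype.ext (eq_of_codes_eq B.2 B'.2 h.1 h.2.1 h.2.2)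
  calc _ ≤ Nat.card _ := Nat.card_le_card_of_injective code hcode
    _ = _ := by
      rw [Nat.card_prod, Nat.card_prod, Nat.card_eq_finsetCard, card_powerset, card_smallSets,
        two_mul, pow_add]
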